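/- arXiv:2310.02611 — 2 statements merged into one kernel-verified Lean document; each statement's English description precedes it below -/
import Mathlib

section
/- Let g₁ and g₂ be real-valued functions on ℝ that are non-decreasing, bounded below, differentiable, and strictly convex, and assume the support of ν is all of Y. Then there exists a function v* ∈ C(Y) minimizing the semi-dual functional L over C(Y); v* is Lipschitz continuous; and it is the unique continuous minimizer. -/
open MeasureTheory Filter
open scoped ENNReal NNReal Topology

noncomputable section

/-- The quadratic transport cost `c(x,y) = τ‖x-y‖₂²`. -/
def cost {d : ℕ} (τ : ℝ) (x y : EuclideanSpace ℝ (Fin d)) : ℝ := τ * ‖x - y‖ ^ 2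

/-- The `c`-transform `v^c(x) = inf_{y ∈ Y} (c(x,y) - v(y))`. -/
def ctransform {d : ℕ} (τ : ℝ) (Y : Set (EuclideanSpace ℝ (Fin d)))
    (v : EuclideanSpace ℝ (Fin d) → ℝ) (x : EuclideanSpace ℝ (Fin d)) : ℝ :=
  sInf ((fun y => cost τ x y - v y) '' Y)

/-- The semi-dual functional
`L(v) = ∫_X g₁(-v^c(x)) dμ(x) + ∫_Y g₂(-v(y)) dν(y)`. -/
def semidual {d : ℕ} (τ : ℝ) (X Y : Set (EuclideanSpace ℝ (Fin d)))
    (μ ν : Measure (EuclideanSpace ℝ (Fin d))) (g₁ g₂ : ℝ → ℝ)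
    (v : EuclideanSpace ℝ (Fin d) → ℝ) : ℝ :=
  (∫ x in X, g₁ (-(ctransform τ Y v x)) ∂μ) + ∫ y in Y, g₂ (-(v y)) ∂ν

/-!
Replacing a potential `w` by its double `c`-transform `w^{cc} ≥ w` leaves `w^c` unchanged and,
`g₂` being non-decreasing, does not increase `L`; moreover `w^{cc}` is Lipschitz with a constant
`K` depending only on `τ` and the size of `X ∪ Y`. As `g₁, g₂` are non-decreasing, bounded below
and tend to `+∞`, `L` is coercive on `K`-Lipschitz functions, so it suffices to minimize over
`K`-Lipschitz functions of bounded sup norm, a compact set by Arzelà–Ascoli on which `L` is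
continuous.

For uniqueness, the `c`-transform is concave, so `L` is convex. If two minimizers `w, v` differed
at a point of `Y`, strict convexity of `g₂` would make the midpoint defect
`(g₂(-w) + g₂(-v))/2 - g₂(-(w+v)/2)` positive on a relatively open subset of `Y`, which has
positive `ν`-measure, and `(w+v)/2` would do strictly better.
-/

open Set
open scoped BoundedContinuousFunction

section Convex

variable {g : ℝ → ℝ}

lemma ConvexOn.map_add_div_two_le (hg : ConvexOn ℝ univ g) (a b : ℝ) :
    g ((a + b) / 2) ≤ (g a + g b) / 2 := by
  have := hg.2 (mem_univ a) (mem_univ b) (by norm_num : (0 : ℝ) ≤ 1 / 2)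
    (by norm_num : (0 : ℝ) ≤ 1 / 2) (by norm_num)
  simp only [smul_eq_mul] at this
  rw [show (a + b) / 2 = 1 / 2 * a + 1 / 2 * b by ring]
  linarith

lemma StrictConvexOn.map_add_div_two_lt (hg : StrictConvexOn ℝ univ g) {a b : ℝ} (hab : a ≠ b) :
    g ((a + b) / 2) < (g a + g b) / 2 := by
  have := hg.2 (mem_univ a) (mem_univ b) hab (by norm_num : (0 : ℝ) < 1 / 2)
    (by norm_num : (0 : ℝ) < 1 / 2) (by norm_num)
  simp only [smul_eq_mul] at this
  rw [show (a + b) / 2 = 1 / 2 * a + 1 / 2 * b by ring]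
  linarith

/-- Strict convexity rules out `g 0 = g 1`, and convexity then gives linear growth with slope
`g 1 - g 0 > 0`. -/
lemma Monotone.tendsto_atTop_of_strictConvexOn (hmono : Monotone g)
    (hconv : StrictConvexOn ℝ univ g) : Tendsto g atTop atTop := by
  have hslope : 0 < g 1 - g 0 := by
    have := hconv.map_add_div_two_lt (zero_ne_one' ℝ)
    linarith [hmono (by norm_num : (0 : ℝ) ≤ (0 + 1) / 2)]
  refine tendsto_atTop_mono' _ ?_ (tendsto_atTop_add_const_left _ (g 1)
    ((tendsto_atTop_add_const_right _ (-1) tendsto_id).atTop_mul_const hslope))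
  filter_upwards [eventually_gt_atTop 1] with t ht
  have := hconv.convexOn.slope_mono_adjacent (mem_univ 0) (mem_univ t) zero_lt_one ht
  rw [sub_zero, div_one, le_div_iff₀ (by linarith)] at this
  simp only [id]
  linarith

end Convex

section Integral

variable {α : Type*} [MeasurableSpace α] {μ : Measure α} {s : Set α}

lemma le_setIntegral_of_forall_le [IsProbabilityMeasure μ] {f : α → ℝ} {c : ℝ}
    (hs : MeasurableSet s) (hμs : μ sᶜ = 0) (hf : IntegrableOn f s μ) (h : ∀ x ∈ s, c ≤ f x) :
    c ≤ ∫ x in s, f x ∂μ := by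
  have := setIntegral_ge_of_const_le_real hs (measure_ne_top μ s) h hf
  rwa [measureReal_def, (prob_compl_eq_zero_iff hs).1 hμs, ENNReal.toReal_one, mul_one] at this

/-- Dominated convergence: the integrand is locally uniformly bounded since `p ↦ T p x` is
`1`-Lipschitz uniformly in `x`. -/
lemma continuous_setIntegral_comp {P : Type*} [PseudoMetricSpace P] [IsFiniteMeasure μ]
    {T : P → α → ℝ} {g : ℝ → ℝ} (hs : MeasurableSet s) (hg : Continuous g)
    (hT_meas : ∀ p, AEStronglyMeasurable (T p) (μ.restrict s))
    (hT_bdd : ∀ p, ∃ C, ∀ x ∈ s, ‖T p x‖ ≤ C)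
    (hT_dist : ∀ p q, ∀ x ∈ s, dist (T p x) (T q x) ≤ dist p q) :
    Continuous fun p => ∫ x in s, g (T p x) ∂μ := by
  refine continuous_iff_continuousAt.2 fun p₀ => ?_
  obtain ⟨C, hC⟩ := hT_bdd p₀
  obtain ⟨D, hD⟩ := (isCompact_closedBall (0 : ℝ) (C + 1)).exists_bound_of_continuousOn
    hg.continuousOn
  refine continuousAt_of_dominated (bound := fun _ => D)
    (Eventually.of_forall fun p => hg.comp_aestronglyMeasurable (hT_meas p)) ?_
    (integrable_const D) (ae_restrict_of_forall_mem hs fun x hx => ?_)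
  · filter_upwards [Metric.ball_mem_nhds p₀ one_pos] with p hp
    refine ae_restrict_of_forall_mem hs fun x hx => hD _ ?_
    rw [mem_closedBall_zero_iff]
    linarith [norm_le_norm_add_norm_sub' (T p x) (T p₀ x), hC x hx, hT_dist p p₀ x hx,
      dist_eq_norm (T p x) (T p₀ x), (Metric.mem_ball.1 hp : dist p p₀ < 1)]
  · exact hg.continuousAt.comp
      (LipschitzWith.of_dist_le_mul (K := 1) fun p q => by
        simpa using hT_dist p q x hx).continuous.continuousAt

variable [TopologicalSpace α]

lemma eqOn_zero_of_setIntegral_eq_zero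
    (hfull : ∀ U : Set α, IsOpen U → (U ∩ s).Nonempty → 0 < μ (U ∩ s)) (hs : MeasurableSet s)
    {f : α → ℝ} (hf : ContinuousOn f s) (hf_nonneg : ∀ x ∈ s, 0 ≤ f x)
    (hf_int : IntegrableOn f s μ) (hf_zero : ∫ x in s, f x ∂μ = 0) : EqOn f 0 s := by
  have hae : f =ᵐ[μ.restrict s] 0 :=
    (setIntegral_eq_zero_iff_of_nonneg_ae (ae_restrict_of_forall_mem hs hf_nonneg) hf_int).1
      hf_zero
  intro x hx
  by_contra hne
  obtain ⟨U, hU, hxU, hUs⟩ := mem_nhdsWithin.1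
    (hf x hx (isOpen_compl_singleton.mem_nhds (hne : f x ≠ 0)))
  have hnull : μ ({y | ¬f y = 0} ∩ s) = 0 := by
    simpa [Measure.restrict_apply' hs] using ae_iff.1 hae
  exact (hfull U hU ⟨x, hxU, hx⟩).ne' (measure_mono_null
    (show U ∩ s ⊆ {y | ¬f y = 0} ∩ s from fun y hy => ⟨hUs hy, hy.2⟩) hnull)

end Integral

lemma Set.nonempty_of_measure_compl_eq_zero {α : Type*} [MeasurableSpace α] {μ : Measure α}
    [NeZero μ] {s : Set α} (h : μ sᶜ = 0) : s.Nonempty := by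
  by_contra hs
  simp [not_nonempty_iff_eq_empty.1 hs] at h
  exact NeZero.ne μ h

namespace BoundedContinuousFunction

variable {α : Type*} [PseudoMetricSpace α] [CompactSpace α]

lemma isCompact_setOf_lipschitzWith_norm_le (K : ℝ≥0) (M : ℝ) :
    IsCompact {u : α →ᵇ ℝ | LipschitzWith K u ∧ ‖u‖ ≤ M} := by
  have hclosed : IsClosed {u : α →ᵇ ℝ | LipschitzWith K u ∧ ‖u‖ ≤ M} :=
    ((isClosed_setOfPred_lipschitzWith (α := α) (β := ℝ) K).preimage continuous_coe).inter
      (Metric.isClosed_closedBall (x := (0 : α →ᵇ ℝ)) (ε := M))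
  exact arzela_ascoli₂ (Metric.closedBall 0 M) (isCompact_closedBall 0 M) _ hclosed
    (fun u p hu => mem_closedBall_zero_iff.2 ((norm_coe_le_norm u p).trans hu.2))
    (LipschitzWith.uniformEquicontinuous _ K fun u => u.2.1).equicontinuous

end BoundedContinuousFunction

lemma Set.domRestrict_extend_val {α β : Type*} {Y : Set α} (u : Y → β) (e : α → β) :
    Y.domRestrict (Function.extend Subtype.val u e) = u :=
  Function.extend_comp Subtype.val_injective u e

lemma LipschitzOnWith.exists_boundedContinuousFunction_eqOn {α : Type*} [PseudoMetricSpace α]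
    {Y : Set α} {w : α → ℝ} {K : ℝ≥0} {M : ℝ} (hY : IsCompact Y) (hw : LipschitzOnWith K w Y)
    (hM0 : 0 ≤ M) (hM : ∀ y ∈ Y, ‖w y‖ ≤ M) :
    ∃ u : Y →ᵇ ℝ, (LipschitzWith K u ∧ ‖u‖ ≤ M) ∧ EqOn (Function.extend Subtype.val u 0) w Y := by
  have := isCompact_iff_compactSpace.1 hY
  exact ⟨.mkOfCompact ⟨_, hw.to_restrict.continuous⟩,
    ⟨hw.to_restrict, (BoundedContinuousFunction.norm_le hM0).2 fun y => hM y y.2⟩,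
    fun y hy => Subtype.val_injective.extend_apply _ (0 : α → ℝ) ⟨y, hy⟩⟩

section CTransform

variable {d : ℕ} {τ R : ℝ} {A B : Set (EuclideanSpace ℝ (Fin d))}
  {φ ψ : EuclideanSpace ℝ (Fin d) → ℝ} {x x' y : EuclideanSpace ℝ (Fin d)}

lemma cost_nonneg (hτ : 0 ≤ τ) (x y : EuclideanSpace ℝ (Fin d)) : 0 ≤ cost τ x y := by
  unfold cost; positivity

lemma cost_comm (τ : ℝ) (x y : EuclideanSpace ℝ (Fin d)) : cost τ x y = cost τ y x := by
  rw [cost, cost, norm_sub_rev]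

lemma cost_le (hτ : 0 ≤ τ) (hx : ‖x‖ ≤ R) (hy : ‖y‖ ≤ R) : cost τ x y ≤ τ * (2 * R) ^ 2 := by
  have : ‖x - y‖ ≤ 2 * R := (norm_sub_le x y).trans (by linarith)
  unfold cost
  gcongr

lemma abs_cost_sub_cost_le (hτ : 0 ≤ τ) (hx : ‖x‖ ≤ R) (hx' : ‖x'‖ ≤ R) (hy : ‖y‖ ≤ R) :
    |cost τ x y - cost τ x' y| ≤ 4 * τ * R * dist x x' := by
  have hsum : ‖x - y‖ + ‖x' - y‖ ≤ 4 * R := by linarith [norm_sub_le x y, norm_sub_le x' y]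
  have hdiff : |‖x - y‖ - ‖x' - y‖| ≤ dist x x' := by
    simpa [dist_eq_norm] using abs_norm_sub_norm_le (x - y) (x' - y)
  calc |cost τ x y - cost τ x' y|
      = τ * (‖x - y‖ + ‖x' - y‖) * |‖x - y‖ - ‖x' - y‖| := by
        rw [cost, cost, ← mul_sub, sq_sub_sq, abs_mul, abs_mul, abs_of_nonneg hτ,
          abs_of_nonneg (by positivity : 0 ≤ ‖x - y‖ + ‖x' - y‖)]
        ring
    _ ≤ τ * (4 * R) * dist x x' := by
        gcongr
        exact mul_nonneg hτ (by linarith [norm_nonneg (x - y), norm_nonneg (x' - y)])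
    _ = 4 * τ * R * dist x x' := by ring

lemma ctransform_le (hτ : 0 ≤ τ) (hφ : BddAbove (φ '' B)) (hy : y ∈ B) (x) :
    ctransform τ B φ x ≤ cost τ x y - φ y := by
  refine csInf_le ?_ (mem_image_of_mem _ hy)
  obtain ⟨M, hM⟩ := hφ
  refine ⟨-M, forall_mem_image.2 fun y' hy' => ?_⟩
  linarith [cost_nonneg hτ x y', hM (mem_image_of_mem φ hy')]

lemma le_ctransform {c : ℝ} (hB : B.Nonempty) (h : ∀ y ∈ B, c ≤ cost τ x y - φ y) :
    c ≤ ctransform τ B φ x :=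
  le_csInf (hB.image _) (forall_mem_image.2 h)

lemma ctransform_congr (h : EqOn φ ψ B) : ctransform τ B φ = ctransform τ B ψ := by
  funext x
  rw [ctransform, ctransform, image_congr fun y hy => by rw [h hy]]

lemma ctransform_lipschitzOnWith (hτ : 0 ≤ τ) (hA : ∀ x ∈ A, ‖x‖ ≤ R) (hB : ∀ y ∈ B, ‖y‖ ≤ R)
    (hBne : B.Nonempty) (hφ : BddAbove (φ '' B)) :
    LipschitzOnWith (4 * τ * R).toNNReal (ctransform τ B φ) A := by
  refine LipschitzOnWith.of_le_add_mul' _ fun x hx x' hx' => ?_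
  rw [← sub_le_iff_le_add]
  refine le_ctransform hBne fun y hy => ?_
  have := (abs_le.mp (abs_cost_sub_cost_le hτ (hA x hx) (hA x' hx') (hB y hy))).2
  linarith [ctransform_le hτ hφ hy x]

lemma continuous_ctransform (hτ : 0 ≤ τ) (hB : Bornology.IsBounded B) (hBne : B.Nonempty)
    (hφ : BddAbove (φ '' B)) : Continuous (ctransform τ B φ) := by
  refine continuous_iff_continuousAt.2 fun x => ?_
  obtain ⟨R, hR⟩ := ((Metric.isBounded_closedBall (x := x) (r := 1)).union hB).exists_norm_le
  exact ((ctransform_lipschitzOnWith hτ (fun x hx => hR x (.inl hx)) (fun y hy => hR y (.inr hy))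
    hBne hφ).continuousOn).continuousAt (Metric.closedBall_mem_nhds x one_pos)

lemma ctransform_sub_le_ctransform {ε : ℝ} (hτ : 0 ≤ τ) (hBne : B.Nonempty)
    (hφ : BddAbove (φ '' B)) (h : ∀ y ∈ B, ψ y ≤ φ y + ε) (x) :
    ctransform τ B φ x - ε ≤ ctransform τ B ψ x :=
  le_ctransform hBne fun y hy => by linarith [ctransform_le hτ hφ hy x, h y hy]

lemma abs_ctransform_sub_ctransform_le {ε : ℝ} (hτ : 0 ≤ τ) (hBne : B.Nonempty)
    (hφ : BddAbove (φ '' B)) (hψ : BddAbove (ψ '' B)) (h : ∀ y ∈ B, |φ y - ψ y| ≤ ε) (x) :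
    |ctransform τ B φ x - ctransform τ B ψ x| ≤ ε := by
  have h₁ := ctransform_sub_le_ctransform hτ hBne hφ (fun y hy => by
    linarith [(abs_le.mp (h y hy)).1] : ∀ y ∈ B, ψ y ≤ φ y + ε) x
  have h₂ := ctransform_sub_le_ctransform hτ hBne hψ (fun y hy => by
    linarith [(abs_le.mp (h y hy)).2] : ∀ y ∈ B, φ y ≤ ψ y + ε) x
  exact abs_sub_le_iff.2 ⟨by linarith, by linarith⟩

lemma add_ctransform_div_two_le (hτ : 0 ≤ τ) (hBne : B.Nonempty) (hφ : BddAbove (φ '' B))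
    (hψ : BddAbove (ψ '' B)) (x) :
    (ctransform τ B φ x + ctransform τ B ψ x) / 2 ≤ ctransform τ B (fun y => (φ y + ψ y) / 2) x :=
  le_ctransform hBne fun y hy => by linarith [ctransform_le hτ hφ hy x, ctransform_le hτ hψ hy x]

lemma le_ctransform_ctransform (hτ : 0 ≤ τ) (hAne : A.Nonempty) (hφ : BddAbove (φ '' B))
    (hy : y ∈ B) : φ y ≤ ctransform τ A (ctransform τ B φ) y :=
  le_ctransform hAne fun x _ => by linarith [ctransform_le hτ hφ hy x, cost_comm τ x y]

lemma ctransform_ctransform_ctransform (hτ : 0 ≤ τ) (hAne : A.Nonempty) (hBne : B.Nonempty)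
    (hφ : BddAbove (φ '' B)) (hφc : BddAbove (ctransform τ B φ '' A))
    (hφcc : BddAbove (ctransform τ A (ctransform τ B φ) '' B)) (hx : x ∈ A) :
    ctransform τ B (ctransform τ A (ctransform τ B φ)) x = ctransform τ B φ x := by
  refine le_antisymm ?_ (le_ctransform hBne fun y hy => ?_)
  · simpa using ctransform_sub_le_ctransform (ε := 0) hτ hBne hφcc
      (fun y hy => by simpa using le_ctransform_ctransform hτ hAne hφ hy) x
  · linarith [ctransform_le hτ hφc hx y, cost_comm τ x y]

end CTransform

section Semidual

variable {d : ℕ} {τ : ℝ} {X Y : Set (EuclideanSpace ℝ (Fin d))}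
  {μ ν : Measure (EuclideanSpace ℝ (Fin d))} {g₁ g₂ : ℝ → ℝ}
  {v w : EuclideanSpace ℝ (Fin d) → ℝ}

lemma continuous_ctransform_of_isCompact (hτ : 0 ≤ τ) (hY : IsCompact Y) (hYne : Y.Nonempty)
    (hw : ContinuousOn w Y) : Continuous (ctransform τ Y w) :=
  continuous_ctransform hτ hY.isBounded hYne (hY.bddAbove_image hw)

lemma integrableOn_comp_neg_ctransform [IsFiniteMeasure μ] {g : ℝ → ℝ} (hτ : 0 ≤ τ)
    (hX : IsCompact X) (hY : IsCompact Y) (hYne : Y.Nonempty) (hg : Continuous g)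
    (hw : ContinuousOn w Y) : IntegrableOn (fun x => g (-ctransform τ Y w x)) X μ :=
  ContinuousOn.integrableOn_compact hX
    (hg.comp (continuous_ctransform_of_isCompact hτ hY hYne hw).neg).continuousOn

lemma semidual_congr (hY : MeasurableSet Y) (h : EqOn v w Y) :
    semidual τ X Y μ ν g₁ g₂ v = semidual τ X Y μ ν g₁ g₂ w := by
  rw [semidual, semidual, ctransform_congr h, setIntegral_congr_fun hY fun y hy => by rw [h hy]]

lemma semidual_ctransform_ctransform_le [IsFiniteMeasure ν] (hτ : 0 ≤ τ) (hX : IsCompact X)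
    (hY : IsCompact Y) (hXne : X.Nonempty) (hYne : Y.Nonempty) (hg₂ : Continuous g₂)
    (hg₂mono : Monotone g₂) (hw : ContinuousOn w Y) :
    semidual τ X Y μ ν g₁ g₂ (ctransform τ X (ctransform τ Y w)) ≤ semidual τ X Y μ ν g₁ g₂ w := by
  have hwc := continuous_ctransform_of_isCompact hτ hY hYne hw
  have hwcc := continuous_ctransform_of_isCompact hτ hX hXne hwc.continuousOn
  rw [semidual, semidual]
  refine add_le_add (le_of_eq (setIntegral_congr_fun hX.measurableSet fun x hx => ?_))
    (setIntegral_mono_on ((hg₂.comp hwcc.neg).continuousOn.integrableOn_compact hY)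
      ((hg₂.comp_continuousOn hw.neg).integrableOn_compact hY) hY.measurableSet
      fun y hy => hg₂mono (neg_le_neg (le_ctransform_ctransform hτ hXne (hY.bddAbove_image hw) hy)))
  rw [ctransform_ctransform_ctransform hτ hXne hYne (hY.bddAbove_image hw)
    (hX.bddAbove_image hwc.continuousOn) (hY.bddAbove_image hwcc.continuousOn) hx]

section Coercivity

variable [IsProbabilityMeasure μ] [IsProbabilityMeasure ν] {R M : ℝ}
  {y₁ : EuclideanSpace ℝ (Fin d)}

lemma le_semidual_of_le_apply {b₂ : ℝ} (hτ : 0 ≤ τ) (hX : IsCompact X) (hY : IsCompact Y)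
    (hμX : μ Xᶜ = 0) (hνY : ν Yᶜ = 0) (hg₁ : Continuous g₁) (hg₂ : Continuous g₂)
    (hg₁mono : Monotone g₁) (hb₂ : ∀ t, b₂ ≤ g₂ t) (hRX : ∀ x ∈ X, ‖x‖ ≤ R)
    (hRY : ∀ y ∈ Y, ‖y‖ ≤ R) (hw : ContinuousOn w Y) (hy₁ : y₁ ∈ Y) (hM : M ≤ w y₁) :
    g₁ (M - τ * (2 * R) ^ 2) + b₂ ≤ semidual τ X Y μ ν g₁ g₂ w := by
  refine add_le_add (le_setIntegral_of_forall_le hX.measurableSet hμX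
      (integrableOn_comp_neg_ctransform hτ hX hY ⟨y₁, hy₁⟩ hg₁ hw) fun x hx => hg₁mono ?_)
    (le_setIntegral_of_forall_le hY.measurableSet hνY
      ((hg₂.comp_continuousOn hw.neg).integrableOn_compact hY) fun y _ => hb₂ _)
  linarith [ctransform_le hτ (hY.bddAbove_image hw) hy₁ x, cost_le hτ (hRX x hx) (hRY y₁ hy₁)]

lemma le_semidual_of_apply_le {b₁ : ℝ} {K : ℝ≥0} (hτ : 0 ≤ τ) (hX : IsCompact X)
    (hY : IsCompact Y) (hμX : μ Xᶜ = 0) (hνY : ν Yᶜ = 0) (hg₁ : Continuous g₁)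
    (hg₂ : Continuous g₂) (hg₂mono : Monotone g₂) (hb₁ : ∀ t, b₁ ≤ g₁ t)
    (hRY : ∀ y ∈ Y, ‖y‖ ≤ R) (hw : LipschitzOnWith K w Y) (hy₁ : y₁ ∈ Y) (hM : w y₁ ≤ -M) :
    b₁ + g₂ (M - K * (2 * R)) ≤ semidual τ X Y μ ν g₁ g₂ w := by
  refine add_le_add (le_setIntegral_of_forall_le hX.measurableSet hμX
      (integrableOn_comp_neg_ctransform hτ hX hY ⟨y₁, hy₁⟩ hg₁ hw.continuousOn) fun x _ => hb₁ _)
    (le_setIntegral_of_forall_le hY.measurableSet hνY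
      ((hg₂.comp_continuousOn hw.continuousOn.neg).integrableOn_compact hY)
      fun y hy => hg₂mono ?_)
  have hdist : dist y y₁ ≤ 2 * R :=
    (dist_le_norm_add_norm y y₁).trans (by linarith [hRY y hy, hRY y₁ hy₁])
  have hlip : w y - w y₁ ≤ K * dist y y₁ :=
    (le_abs_self _).trans ((Real.dist_eq _ _).symm.trans_le (hw.dist_le_mul y hy y₁ hy₁))
  nlinarith [mul_le_mul_of_nonneg_left hdist K.coe_nonneg]

/-- Coercivity. A large value of `w` at one point of `Y` pushes `-w^c` up on all of `X`; by the
Lipschitz bound, a very negative one pushes `-w` up on all of `Y`. -/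
lemma eventually_norm_le_of_semidual_lt (hτ : 0 ≤ τ) (hX : IsCompact X) (hY : IsCompact Y)
    (hμX : μ Xᶜ = 0) (hνY : ν Yᶜ = 0) (hg₁ : Continuous g₁) (hg₂ : Continuous g₂)
    (hg₁mono : Monotone g₁) (hg₂mono : Monotone g₂) (hg₁bdd : BddBelow (range g₁))
    (hg₂bdd : BddBelow (range g₂)) (hg₁top : Tendsto g₁ atTop atTop)
    (hg₂top : Tendsto g₂ atTop atTop) (K : ℝ≥0) (c : ℝ) :
    ∀ᶠ M in atTop, ∀ w, LipschitzOnWith K w Y → semidual τ X Y μ ν g₁ g₂ w < c →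
      ∀ y ∈ Y, ‖w y‖ ≤ M := by
  obtain ⟨R, hR⟩ := (hX.union hY).isBounded.exists_norm_le
  obtain ⟨b₁, hb₁⟩ := hg₁bdd
  obtain ⟨b₂, hb₂⟩ := hg₂bdd
  have hshift (C : ℝ) : Tendsto (fun M : ℝ => M - C) atTop atTop :=
    tendsto_atTop_add_const_right _ (-C) tendsto_id
  filter_upwards [(hg₁top.comp (hshift (τ * (2 * R) ^ 2))).eventually_ge_atTop (c - b₂),
    (hg₂top.comp (hshift (K * (2 * R)))).eventually_ge_atTop (c - b₁)] with M hM₁ hM₂ w hw hLw y hy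
  by_contra! hlt
  rcases lt_abs.1 (Real.norm_eq_abs (w y) ▸ hlt) with hpos | hneg
  · have := le_semidual_of_le_apply hτ hX hY hμX hνY hg₁ hg₂ hg₁mono (fun t => hb₂ ⟨t, rfl⟩)
      (fun x hx => hR x (.inl hx)) (fun y hy => hR y (.inr hy)) hw.continuousOn hy hpos.le
    simp only [Function.comp_apply] at hM₁
    linarith
  · have := le_semidual_of_apply_le hτ hX hY hμX hνY hg₁ hg₂ hg₂mono (fun t => hb₁ ⟨t, rfl⟩)
      (fun y hy => hR y (.inr hy)) hw hy (by linarith : w y ≤ -M)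
    simp only [Function.comp_apply] at hM₂
    linarith

end Coercivity

lemma continuous_semidual_extend [IsFiniteMeasure μ] [IsFiniteMeasure ν] (hτ : 0 ≤ τ)
    (hX : IsCompact X) (hY : IsCompact Y) (hYne : Y.Nonempty) (hg₁ : Continuous g₁)
    (hg₂ : Continuous g₂) :
    Continuous fun u : Y →ᵇ ℝ => semidual τ X Y μ ν g₁ g₂ (Function.extend Subtype.val u 0) := by
  have hext (u : Y →ᵇ ℝ) {y} (hy : y ∈ Y) : Function.extend Subtype.val u 0 y = u ⟨y, hy⟩ :=
    Subtype.val_injective.extend_apply (⇑u) (0 : EuclideanSpace ℝ (Fin d) → ℝ) ⟨y, hy⟩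
  have hext_cont (u : Y →ᵇ ℝ) : ContinuousOn (Function.extend Subtype.val u 0) Y :=
    continuousOn_iff_continuous_domRestrict.2 (by rw [domRestrict_extend_val]; exact u.continuous)
  have hext_dist (u u' : Y →ᵇ ℝ) {y} (hy : y ∈ Y) :
      dist (Function.extend Subtype.val u 0 y) (Function.extend Subtype.val u' 0 y)
        ≤ dist u u' := by
    rw [hext u hy, hext u' hy]
    exact BoundedContinuousFunction.dist_coe_le_dist _
  have hc (u : Y →ᵇ ℝ) := continuous_ctransform_of_isCompact hτ hY hYne (hext_cont u)
  unfold semidual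
  refine .add (continuous_setIntegral_comp hX.measurableSet hg₁
      (fun u => (hc u).neg.aestronglyMeasurable)
      (fun u => hX.exists_bound_of_continuousOn (hc u).neg.continuousOn) fun u u' x _ => ?_)
    (continuous_setIntegral_comp hY.measurableSet hg₂
      (fun u => (hext_cont u).neg.aestronglyMeasurable hY.measurableSet)
      (fun u => hY.exists_bound_of_continuousOn (hext_cont u).neg) fun u u' y hy => ?_)
  · rw [dist_neg_neg, Real.dist_eq]
    exact abs_ctransform_sub_ctransform_le hτ hYne (hY.bddAbove_image (hext_cont u))
      (hY.bddAbove_image (hext_cont u')) (fun y hy => Real.dist_eq _ _ ▸ hext_dist u u' hy) x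
  · rw [dist_neg_neg]
    exact hext_dist u u' hy

end Semidual

section Minimizer

variable {d : ℕ} {τ : ℝ} {X Y : Set (EuclideanSpace ℝ (Fin d))}
  {μ ν : Measure (EuclideanSpace ℝ (Fin d))} {g₁ g₂ : ℝ → ℝ}
  {v w : EuclideanSpace ℝ (Fin d) → ℝ}

theorem exists_lipschitzOnWith_forall_semidual_le [IsProbabilityMeasure μ]
    [IsProbabilityMeasure ν] (hτ : 0 ≤ τ) (hX : IsCompact X) (hY : IsCompact Y)
    (hμX : μ Xᶜ = 0) (hνY : ν Yᶜ = 0) (hg₁ : Continuous g₁) (hg₂ : Continuous g₂)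
    (hg₁mono : Monotone g₁) (hg₂mono : Monotone g₂) (hg₁bdd : BddBelow (range g₁))
    (hg₂bdd : BddBelow (range g₂)) (hg₁top : Tendsto g₁ atTop atTop)
    (hg₂top : Tendsto g₂ atTop atTop) :
    ∃ v, (∃ K : ℝ≥0, LipschitzOnWith K v Y) ∧
      ∀ w, ContinuousOn w Y → semidual τ X Y μ ν g₁ g₂ v ≤ semidual τ X Y μ ν g₁ g₂ w := by
  set L := semidual τ X Y μ ν g₁ g₂
  have hXne := nonempty_of_measure_compl_eq_zero hμX
  have hYne := nonempty_of_measure_compl_eq_zero hνY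
  obtain ⟨R, hR⟩ := (hX.union hY).isBounded.exists_norm_le
  set K := (4 * τ * R).toNNReal
  have hdouble (w) (hw : ContinuousOn w Y) :
      LipschitzOnWith K (ctransform τ X (ctransform τ Y w)) Y :=
    ctransform_lipschitzOnWith hτ (fun y hy => hR y (.inr hy)) (fun x hx => hR x (.inl hx)) hXne
      (hX.bddAbove_image (continuous_ctransform_of_isCompact hτ hY hYne hw).continuousOn)
  have hdouble_le (w) (hw : ContinuousOn w Y) := semidual_ctransform_ctransform_le (μ := μ)
    (ν := ν) (g₁ := g₁) hτ hX hY hXne hYne hg₂ hg₂mono hw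
  have hu₀ := hdouble 0 continuousOn_const
  obtain ⟨M₀, hM₀⟩ := hY.exists_bound_of_continuousOn hu₀.continuousOn
  obtain ⟨M, hM₀M, hM⟩ := ((eventually_ge_atTop (max M₀ 0)).and
    (eventually_norm_le_of_semidual_lt hτ hX hY hμX hνY hg₁ hg₂ hg₁mono hg₂mono hg₁bdd hg₂bdd
      hg₁top hg₂top K (L (ctransform τ X (ctransform τ Y 0))))).exists
  have hM0 : 0 ≤ M := (le_max_right _ _).trans hM₀M
  obtain ⟨b₀, hb₀, hb₀_eq⟩ := hu₀.exists_boundedContinuousFunction_eqOn hY hM0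
    fun y hy => (hM₀ y hy).trans ((le_max_left _ _).trans hM₀M)
  have := isCompact_iff_compactSpace.1 hY
  obtain ⟨b, hb, hmin⟩ := (BoundedContinuousFunction.isCompact_setOf_lipschitzWith_norm_le K M
    ).exists_isMinOn ⟨b₀, hb₀⟩
    (continuous_semidual_extend (μ := μ) (ν := ν) hτ hX hY hYne hg₁ hg₂).continuousOn
  refine ⟨Function.extend Subtype.val b 0, ⟨K, lipschitzOnWith_iff_restrict.2 ?_⟩, fun w hw => ?_⟩
  · rw [Set.domRestrict_extend_val]
    exact hb.1
  by_contra! hlt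
  have hLw : L (ctransform τ X (ctransform τ Y w)) < L (Function.extend Subtype.val b 0) :=
    (hdouble_le w hw).trans_lt hlt
  obtain ⟨b', hb', hb'_eq⟩ := (hdouble w hw).exists_boundedContinuousFunction_eqOn hY hM0
    (hM _ (hdouble w hw)
      (hLw.trans_le ((hmin hb₀).trans_eq (semidual_congr hY.measurableSet hb₀_eq))))
  exact (hmin hb').not_gt ((semidual_congr hY.measurableSet hb'_eq).trans_lt hLw)

lemma semidual_midpoint_add_setIntegral_le [IsFiniteMeasure μ] [IsFiniteMeasure ν]
    (hτ : 0 ≤ τ) (hX : IsCompact X) (hY : IsCompact Y) (hYne : Y.Nonempty)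
    (hg₁ : Continuous g₁) (hg₂ : Continuous g₂) (hg₁mono : Monotone g₁)
    (hg₁conv : ConvexOn ℝ univ g₁) (hw : ContinuousOn w Y) (hv : ContinuousOn v Y) :
    semidual τ X Y μ ν g₁ g₂ (fun y => (w y + v y) / 2)
        + ∫ y in Y, ((g₂ (-w y) + g₂ (-v y)) / 2 - g₂ (-((w y + v y) / 2))) ∂ν
      ≤ (semidual τ X Y μ ν g₁ g₂ w + semidual τ X Y μ ν g₁ g₂ v) / 2 := by
  have hz : ContinuousOn (fun y => (w y + v y) / 2) Y := (hw.add hv).div_const 2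
  have iw₁ := integrableOn_comp_neg_ctransform (μ := μ) hτ hX hY hYne hg₁ hw
  have iv₁ := integrableOn_comp_neg_ctransform (μ := μ) hτ hX hY hYne hg₁ hv
  have iz₁ := integrableOn_comp_neg_ctransform (μ := μ) hτ hX hY hYne hg₁ hz
  have iw₂ : IntegrableOn (fun y => g₂ (-w y)) Y ν :=
    (hg₂.comp_continuousOn hw.neg).integrableOn_compact hY
  have iv₂ : IntegrableOn (fun y => g₂ (-v y)) Y ν :=
    (hg₂.comp_continuousOn hv.neg).integrableOn_compact hY
  have iz₂ : IntegrableOn (fun y => g₂ (-((w y + v y) / 2))) Y ν :=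
    (hg₂.comp_continuousOn hz.neg).integrableOn_compact hY
  have h₁ : ∫ x in X, g₁ (-ctransform τ Y (fun y => (w y + v y) / 2) x) ∂μ
      ≤ ((∫ x in X, g₁ (-ctransform τ Y w x) ∂μ) + ∫ x in X, g₁ (-ctransform τ Y v x) ∂μ) / 2 := by
    rw [← integral_add iw₁ iv₁, ← integral_div]
    refine setIntegral_mono_on iz₁ ((iw₁.add iv₁).div_const 2) hX.measurableSet fun x _ => ?_
    calc g₁ (-ctransform τ Y (fun y => (w y + v y) / 2) x)
        ≤ g₁ ((-ctransform τ Y w x + -ctransform τ Y v x) / 2) := hg₁mono (by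
          linarith [add_ctransform_div_two_le hτ hYne (hY.bddAbove_image hw)
            (hY.bddAbove_image hv) x])
      _ ≤ _ := hg₁conv.map_add_div_two_le _ _
  have h₂ : ∫ y in Y, ((g₂ (-w y) + g₂ (-v y)) / 2 - g₂ (-((w y + v y) / 2))) ∂ν
      = ((∫ y in Y, g₂ (-w y) ∂ν) + ∫ y in Y, g₂ (-v y) ∂ν) / 2
        - ∫ y in Y, g₂ (-((w y + v y) / 2)) ∂ν := by
    have iwv₂ : IntegrableOn (fun y => (g₂ (-w y) + g₂ (-v y)) / 2) Y ν :=
      (iw₂.add iv₂).div_const 2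
    rw [integral_sub iwv₂ iz₂, integral_div, integral_add iw₂ iv₂]
  rw [semidual, semidual, semidual, h₂]
  linarith

theorem eqOn_of_forall_semidual_le [IsFiniteMeasure μ] [IsFiniteMeasure ν] (hτ : 0 ≤ τ)
    (hX : IsCompact X) (hY : IsCompact Y) (hYne : Y.Nonempty)
    (hνfull : ∀ U, IsOpen U → (U ∩ Y).Nonempty → 0 < ν (U ∩ Y))
    (hg₁ : Continuous g₁) (hg₂ : Continuous g₂) (hg₁mono : Monotone g₁)
    (hg₁conv : ConvexOn ℝ univ g₁) (hg₂conv : StrictConvexOn ℝ univ g₂)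
    (hv : ContinuousOn v Y) (hw : ContinuousOn w Y)
    (hv_min : ∀ u, ContinuousOn u Y → semidual τ X Y μ ν g₁ g₂ v ≤ semidual τ X Y μ ν g₁ g₂ u)
    (hwv : semidual τ X Y μ ν g₁ g₂ w ≤ semidual τ X Y μ ν g₁ g₂ v) : EqOn w v Y := by
  have hL_mid := semidual_midpoint_add_setIntegral_le (μ := μ) (ν := ν) hτ hX hY hYne hg₁ hg₂
    hg₁mono hg₁conv hw hv
  have hv_le_mid :
      semidual τ X Y μ ν g₁ g₂ v ≤ semidual τ X Y μ ν g₁ g₂ (fun y => (w y + v y) / 2) :=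
    hv_min _ ((hw.add hv).div_const 2)
  set gap := fun y => (g₂ (-w y) + g₂ (-v y)) / 2 - g₂ (-((w y + v y) / 2))
  have hmid (y) : -((w y + v y) / 2) = (-w y + -v y) / 2 := by ring
  have hgap_nonneg (y) (_ : y ∈ Y) : 0 ≤ gap y := by
    have := hmid y ▸ hg₂conv.convexOn.map_add_div_two_le (-w y) (-v y)
    simp only [gap]
    linarith
  have hgap_cont : ContinuousOn gap Y :=
    (((hg₂.comp_continuousOn hw.neg).add (hg₂.comp_continuousOn hv.neg)).div_const 2).sub
      (hg₂.comp_continuousOn ((hw.add hv).div_const 2).neg)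
  have hgap_le : ∫ y in Y, gap y ∂ν ≤ 0 := by linarith
  have hgap_zero : EqOn gap 0 Y :=
    eqOn_zero_of_setIntegral_eq_zero hνfull hY.measurableSet hgap_cont hgap_nonneg
      (hgap_cont.integrableOn_compact hY)
      (hgap_le.antisymm (setIntegral_nonneg hY.measurableSet hgap_nonneg))
  intro y hy
  by_contra hne
  have hlt := hmid y ▸ hg₂conv.map_add_div_two_lt (neg_injective.ne hne)
  have h0 : gap y = 0 := hgap_zero hy
  simp only [gap] at h0
  linarith

end Minimizer

theorem semidual_exists_unique_lipschitz_minimizer_general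
    {d : ℕ} (τ : ℝ) (hτ : 0 < τ)
    (X Y : Set (EuclideanSpace ℝ (Fin d))) (hX : IsCompact X) (hY : IsCompact Y)
    (μ ν : Measure (EuclideanSpace ℝ (Fin d)))
    [IsProbabilityMeasure μ] [IsProbabilityMeasure ν]
    (hμX : μ Xᶜ = 0) (hνY : ν Yᶜ = 0)
    (hνfull : ∀ U : Set (EuclideanSpace ℝ (Fin d)),
      IsOpen U → (U ∩ Y).Nonempty → 0 < ν (U ∩ Y))
    (g₁ g₂ : ℝ → ℝ)
    (hg₁mono : Monotone g₁) (hg₂mono : Monotone g₂)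
    (hg₁bdd : BddBelow (Set.range g₁)) (hg₂bdd : BddBelow (Set.range g₂))
    (hg₁conv : StrictConvexOn ℝ Set.univ g₁) (hg₂conv : StrictConvexOn ℝ Set.univ g₂) :
    ∃ v : EuclideanSpace ℝ (Fin d) → ℝ,
      ContinuousOn v Y ∧
      (∃ K : ℝ≥0, LipschitzOnWith K v Y) ∧
      (∀ w : EuclideanSpace ℝ (Fin d) → ℝ, ContinuousOn w Y →
        semidual τ X Y μ ν g₁ g₂ v ≤ semidual τ X Y μ ν g₁ g₂ w) ∧
      (∀ w : EuclideanSpace ℝ (Fin d) → ℝ, ContinuousOn w Y →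
        (∀ u : EuclideanSpace ℝ (Fin d) → ℝ, ContinuousOn u Y →
          semidual τ X Y μ ν g₁ g₂ w ≤ semidual τ X Y μ ν g₁ g₂ u) →
        Set.EqOn w v Y) := by
  have hg₁ : Continuous g₁ := continuousOn_univ.1 (hg₁conv.convexOn.continuousOn isOpen_univ)
  have hg₂ : Continuous g₂ := continuousOn_univ.1 (hg₂conv.convexOn.continuousOn isOpen_univ)
  obtain ⟨v, ⟨K, hvK⟩, hv_min⟩ := exists_lipschitzOnWith_forall_semidual_le hτ.le hX hY hμX hνY
    hg₁ hg₂ hg₁mono hg₂mono hg₁bdd hg₂bdd (hg₁mono.tendsto_atTop_of_strictConvexOn hg₁conv)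
    (hg₂mono.tendsto_atTop_of_strictConvexOn hg₂conv)
  refine ⟨v, hvK.continuousOn, ⟨K, hvK⟩, hv_min, fun w hw hw_min => ?_⟩
  exact eqOn_of_forall_semidual_le hτ.le hX hY (nonempty_of_measure_compl_eq_zero hνY) hνfull hg₁
    hg₂ hg₁mono hg₁conv.convexOn hg₂conv hvK.continuousOn hw hv_min (hw_min v hvK.continuousOn)

/-- If `g₁, g₂` are non-decreasing, bounded below, differentiable and
strictly convex, and `ν` has full support in `Y`, then the semi-dual functional `L`
admits a minimizer `v⋆` over `C(Y)`; `v⋆` is Lipschitz continuous; and it is the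
unique continuous minimizer (up to equality on `Y`). -/
theorem semidual_exists_unique_lipschitz_minimizer
    {d : ℕ} (τ : ℝ) (hτ : 0 < τ)
    (X Y : Set (EuclideanSpace ℝ (Fin d))) (hX : IsCompact X) (hY : IsCompact Y)
    (μ ν : Measure (EuclideanSpace ℝ (Fin d)))
    [IsProbabilityMeasure μ] [IsProbabilityMeasure ν]
    (hμX : μ Xᶜ = 0) (hνY : ν Yᶜ = 0)
    (hνfull : ∀ U : Set (EuclideanSpace ℝ (Fin d)),
      IsOpen U → (U ∩ Y).Nonempty → 0 < ν (U ∩ Y))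
    (g₁ g₂ : ℝ → ℝ)
    (hg₁mono : Monotone g₁) (hg₂mono : Monotone g₂)
    (hg₁bdd : BddBelow (Set.range g₁)) (hg₂bdd : BddBelow (Set.range g₂))
    (hg₁diff : Differentiable ℝ g₁) (hg₂diff : Differentiable ℝ g₂)
    (hg₁conv : StrictConvexOn ℝ Set.univ g₁) (hg₂conv : StrictConvexOn ℝ Set.univ g₂) :
    ∃ v : EuclideanSpace ℝ (Fin d) → ℝ,
      ContinuousOn v Y ∧
      (∃ K : ℝ≥0, LipschitzOnWith K v Y) ∧
      (∀ w : EuclideanSpace ℝ (Fin d) → ℝ, ContinuousOn w Y →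
        semidual τ X Y μ ν g₁ g₂ v ≤ semidual τ X Y μ ν g₁ g₂ w) ∧
      (∀ w : EuclideanSpace ℝ (Fin d) → ℝ, ContinuousOn w Y →
        (∀ u : EuclideanSpace ℝ (Fin d) → ℝ, ContinuousOn u Y →
          semidual τ X Y μ ν g₁ g₂ w ≤ semidual τ X Y μ ν g₁ g₂ u) →
        Set.EqOn w v Y) :=
  semidual_exists_unique_lipschitz_minimizer_general τ hτ X Y hX hY μ ν hμX hνY hνfull g₁ g₂ hg₁mono
    hg₂mono hg₁bdd hg₂bdd hg₁conv hg₂conv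
end
end

section
/- Let Ψ₁, Ψ₂ be entropy functions that are strictly convex on (0,∞) and finite on (0,∞). Then the α-scaled unbalanced optimal transport cost converges to the optimal transport cost as α → ∞: lim_{α→∞} C_ub^α(μ,ν) = C(μ,ν). -/
open MeasureTheory Filter
open scoped ENNReal NNReal Topology Classical

noncomputable section

/-- An entropy function `Ψ : ℝ → [0,∞]`: convex, lower semicontinuous, non-negative
(automatic from the codomain), `Ψ(x) = ∞` for `x < 0`, `Ψ(1) = 0`, and superlinear. -/
structure IsEntropy (Ψ : ℝ → ℝ≥0∞) : Prop where
  convex : ∀ x y : ℝ, ∀ t : ℝ, 0 ≤ t → t ≤ 1 →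
    Ψ (t * x + (1 - t) * y) ≤ ENNReal.ofReal t * Ψ x + ENNReal.ofReal (1 - t) * Ψ y
  lsc : LowerSemicontinuous Ψ
  eq_top_of_neg : ∀ x : ℝ, x < 0 → Ψ x = ∞
  one_eq_zero : Ψ 1 = 0
  superlinear : Tendsto (fun t : ℝ => Ψ t / ENNReal.ofReal t) atTop (𝓝 ∞)

/-- The Csiszár divergence `D_Ψ(ρ|σ) = ∫ Ψ(dρ/dσ) dσ` if `ρ ≪ σ`, and `∞` otherwise. -/
def csiszar {Z : Type*} [MeasurableSpace Z] (Ψ : ℝ → ℝ≥0∞) (ρ σ : Measure Z) : ℝ≥0∞ :=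
  if ρ ≪ σ then ∫⁻ z, Ψ ((ρ.rnDeriv σ z).toReal) ∂σ else ∞

/-- The objective of the `α`-scaled unbalanced optimal transport problem:
`∫ c dπ + α D_{Ψ₁}(π₀|μ) + α D_{Ψ₂}(π₁|ν)`. -/
def uotObj {d : ℕ} (τ α : ℝ) (Ψ₁ Ψ₂ : ℝ → ℝ≥0∞)
    (μ ν : Measure (EuclideanSpace ℝ (Fin d)))
    (π : Measure (EuclideanSpace ℝ (Fin d) × EuclideanSpace ℝ (Fin d))) : ℝ≥0∞ :=
  (∫⁻ z, ENNReal.ofReal (cost τ z.1 z.2) ∂π)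
    + ENNReal.ofReal α * csiszar Ψ₁ (π.map Prod.fst) μ
    + ENNReal.ofReal α * csiszar Ψ₂ (π.map Prod.snd) ν

/-- The `α`-scaled unbalanced optimal transport cost `C_ub^α(μ,ν)`, the infimum of the
objective over finite positive Borel measures `π` supported on `X × Y`. -/
def UOTcost {d : ℕ} (τ α : ℝ) (Ψ₁ Ψ₂ : ℝ → ℝ≥0∞) (X Y : Set (EuclideanSpace ℝ (Fin d)))
    (μ ν : Measure (EuclideanSpace ℝ (Fin d))) : ℝ≥0∞ :=
  ⨅ (π : Measure (EuclideanSpace ℝ (Fin d) × EuclideanSpace ℝ (Fin d)))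
    (_ : IsFiniteMeasure π) (_ : π ((X ×ˢ Y)ᶜ) = 0), uotObj τ α Ψ₁ Ψ₂ μ ν π

/-- The optimal transport cost `C(μ,ν) = inf_{π ∈ Π(μ,ν)} ∫ c dπ`. -/
def OTcost {d : ℕ} (τ : ℝ) (μ ν : Measure (EuclideanSpace ℝ (Fin d))) : ℝ≥0∞ :=
  ⨅ (π : Measure (EuclideanSpace ℝ (Fin d) × EuclideanSpace ℝ (Fin d)))
    (_ : π.map Prod.fst = μ ∧ π.map Prod.snd = ν),
    ∫⁻ z, ENNReal.ofReal (cost τ z.1 z.2) ∂π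


/-- `Ψ` is strictly convex on `(0,∞)`. -/
def StrictlyConvexOnPos (Ψ : ℝ → ℝ≥0∞) : Prop :=
  ∀ x ∈ Set.Ioi (0:ℝ), ∀ y ∈ Set.Ioi (0:ℝ), x ≠ y → ∀ t : ℝ, 0 < t → t < 1 →
    Ψ (t * x + (1 - t) * y) < ENNReal.ofReal t * Ψ x + ENNReal.ofReal (1 - t) * Ψ y

/-! Couplings of `μ` and `ν` make both divergence terms vanish, so `C_ub^α ≤ C`, and `C_ub^α` is
nondecreasing in `α`; it remains to bound `C` by `C_ub^α` up to errors vanishing as `α → ∞`.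

A plan `π` of finite objective has marginals `π₀ ≪ μ`, `π₁ ≪ ν`. Damping `π` by the density
`min(1, (dπ₀/dμ)⁻¹) · min(1, (dπ₁/dν)⁻¹)` pushes its marginals below `μ` and `ν`, and adding the
normalized product of the missing masses gives a coupling. As the cost is bounded by some `K` on
the compact `X × Y`, this raises the cost by at most `K (‖dπ₀/dμ - 1‖₁ + ‖dπ₁/dν - 1‖₁)`.

Strict convexity makes `Ψ(1 ± δ) > 0`, and convexity then gives `|t - 1| ≤ δ + c_δ Ψ(t)`. So the
`L¹` defects are at most `2δ + c_δ (D_{Ψ₁} + D_{Ψ₂}) ≤ 2δ + c_δ · objective / α`, whence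
`C ≤ C_ub^α (1 + K c_δ / α) + 2Kδ`. Let `α → ∞`, then `δ → 0`.
-/

lemma ENNReal.one_sub_add_sub_one {e : ℝ≥0∞} (he : e ≠ ∞) :
    (1 - e) + (e - 1) = ENNReal.ofReal |e.toReal - 1| := by
  obtain ⟨t, ht, rfl⟩ : ∃ t, 0 ≤ t ∧ e = ENNReal.ofReal t :=
    ⟨e.toReal, ENNReal.toReal_nonneg, (ENNReal.ofReal_toReal he).symm⟩
  rw [ENNReal.toReal_ofReal ht, ← ENNReal.ofReal_one, ← ENNReal.ofReal_sub _ ht,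
    ← ENNReal.ofReal_sub _ zero_le_one]
  rcases le_total t 1 with h | h
  · rw [ENNReal.ofReal_of_nonpos (by linarith : t - 1 ≤ 0), add_zero,
      abs_of_nonpos (by linarith), neg_sub]
  · rw [ENNReal.ofReal_of_nonpos (by linarith : 1 - t ≤ 0), zero_add, abs_of_nonneg (by linarith)]

lemma ENNReal.mul_min_one_inv_le_one (t : ℝ≥0∞) : t * min 1 t⁻¹ ≤ 1 :=
  (mul_le_mul_right (min_le_right _ _) t).trans (ENNReal.mul_inv_le_one t)

lemma ENNReal.mul_one_sub_min_one_inv_le (t : ℝ≥0∞) : t * (1 - min 1 t⁻¹) ≤ t - 1 := by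
  rcases le_total t 1 with h | h
  · simp [min_eq_left (ENNReal.one_le_inv.2 h)]
  rcases eq_or_ne t ∞ with rfl | ht
  · simp
  rw [min_eq_right (ENNReal.inv_le_one.2 h), ENNReal.mul_sub (fun _ _ => ht), mul_one,
    ENNReal.mul_inv_cancel (by positivity) ht]

lemma ENNReal.one_le_mul_add_one_sub_add_one_sub {a b : ℝ≥0∞} (ha : a ≤ 1) (hb : b ≤ 1) :
    1 ≤ a * b + ((1 - a) + (1 - b)) := by
  have hab : a = a * b + a * (1 - b) := by
    rw [ENNReal.mul_sub fun _ _ => (ha.trans_lt ENNReal.one_lt_top).ne, mul_one,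
      add_tsub_cancel_of_le (mul_le_of_le_one_right' hb)]
  calc (1 : ℝ≥0∞) ≤ a + (1 - a) := le_add_tsub
    _ ≤ a * b + (1 - b) + (1 - a) := by
        gcongr
        calc a = a * b + a * (1 - b) := hab
          _ ≤ a * b + (1 - b) := by gcongr; exact mul_le_of_le_one_left' ha
    _ = a * b + ((1 - a) + (1 - b)) := by ring

lemma StrictlyConvexOnPos.apply_ne_zero {Ψ : ℝ → ℝ≥0∞} (hsc : StrictlyConvexOnPos Ψ)
    (h1 : Ψ 1 = 0) {x : ℝ} (hx : 0 < x) (hx1 : x ≠ 1) : Ψ x ≠ 0 := by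
  intro hx0
  have h := hsc x hx 1 (Set.mem_Ioi.2 one_pos) hx1 (1 / 2) (by norm_num) (by norm_num)
  rw [hx0, h1, mul_zero, mul_zero, add_zero] at h
  exact not_lt_zero h

namespace IsEntropy

variable {Ψ : ℝ → ℝ≥0∞}

lemma apply_one_add_mul_le (hΨ : IsEntropy Ψ) {w : ℝ} (hw0 : 0 ≤ w) (hw1 : w ≤ 1) (t : ℝ) :
    Ψ (1 + w * (t - 1)) ≤ ENNReal.ofReal w * Ψ t := by
  have h := hΨ.convex t 1 w hw0 hw1
  rwa [hΨ.one_eq_zero, mul_zero, add_zero, show w * t + (1 - w) * 1 = 1 + w * (t - 1) by ring] at h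

/-- The slope of `Ψ` seen from its zero at `1` grows with the distance to `1`. -/
lemma abs_sub_one_mul_le (hΨ : IsEntropy Ψ) {s t : ℝ} (hsgn : 0 ≤ (s - 1) * (t - 1))
    (hst : |s - 1| ≤ |t - 1|) :
    ENNReal.ofReal |t - 1| * Ψ s ≤ ENNReal.ofReal |s - 1| * Ψ t := by
  rcases eq_or_ne t 1 with rfl | ht
  · simp
  have ht' : t - 1 ≠ 0 := sub_ne_zero.2 ht
  set w := (s - 1) / (t - 1)
  have hw : w * (t - 1) = s - 1 := div_mul_cancel₀ _ ht'
  have hw0 : 0 ≤ w := by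
    have h : 0 ≤ w * (t - 1) ^ 2 := by rw [sq, ← mul_assoc, hw]; exact hsgn
    exact nonneg_of_mul_nonneg_left h (by positivity)
  have hw1 : w ≤ 1 := by
    rw [← abs_of_nonneg hw0, abs_div]
    exact div_le_one_of_le₀ hst (abs_nonneg _)
  have hs : 1 + w * (t - 1) = s := by rw [hw]; ring
  have habs : |s - 1| = w * |t - 1| := by
    rw [← hw, abs_mul, abs_of_nonneg hw0]
  calc ENNReal.ofReal |t - 1| * Ψ s
      ≤ ENNReal.ofReal |t - 1| * (ENNReal.ofReal w * Ψ t) := by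
        gcongr
        simpa only [hs] using hΨ.apply_one_add_mul_le hw0 hw1 t
    _ = ENNReal.ofReal |s - 1| * Ψ t := by
        rw [habs, ENNReal.ofReal_mul hw0]; ring

lemma exists_abs_sub_one_le (hΨ : IsEntropy Ψ) (hsc : StrictlyConvexOnPos Ψ)
    (hfin : ∀ x : ℝ, 0 < x → Ψ x ≠ ∞) {δ : ℝ} (hδ0 : 0 < δ) (hδ1 : δ < 1) :
    ∃ c : ℝ≥0, ∀ t : ℝ, ENNReal.ofReal |t - 1| ≤ ENNReal.ofReal δ + Ψ t * c := by
  have hΨs : ∀ s, |s - 1| = δ → Ψ s ≠ 0 ∧ Ψ s ≠ ∞ := fun s hs => by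
    have hs0 : 0 < s := by cases abs_eq hδ0.le |>.1 hs <;> linarith
    have hs1 : s ≠ 1 := by rintro rfl; simp [hδ0.ne] at hs
    exact ⟨hsc.apply_ne_zero hΨ.one_eq_zero hs0 hs1, hfin s hs0⟩
  set c : ℝ≥0∞ := ENNReal.ofReal δ * ((Ψ (1 - δ))⁻¹ + (Ψ (1 + δ))⁻¹)
  have hc : c ≠ ∞ := by
    have hlo := (hΨs (1 - δ) (by simp [abs_of_pos hδ0])).1
    have hhi := (hΨs (1 + δ) (by simp [abs_of_pos hδ0])).1
    exact ENNReal.mul_ne_top ENNReal.ofReal_ne_top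
      (ENNReal.add_ne_top.2 ⟨ENNReal.inv_ne_top.2 hlo, ENNReal.inv_ne_top.2 hhi⟩)
  -- on the far side of `1 ± δ`, compare with the slope of `Ψ` at `1 ± δ`
  have hslope : ∀ s t, |s - 1| = δ → 0 ≤ (s - 1) * (t - 1) → δ ≤ |t - 1| →
      ENNReal.ofReal |t - 1| ≤ Ψ t * (ENNReal.ofReal δ * (Ψ s)⁻¹) := fun s t hs hsgn ht => by
    obtain ⟨h0, htop⟩ := hΨs s hs
    have h := hΨ.abs_sub_one_mul_le hsgn (hs ▸ ht)
    rw [hs, ← ENNReal.le_div_iff_mul_le (Or.inl h0) (Or.inl htop)] at h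
    rwa [div_eq_mul_inv, mul_comm (ENNReal.ofReal δ), mul_assoc] at h
  refine ⟨c.toNNReal, fun t => ?_⟩
  rw [ENNReal.coe_toNNReal hc]
  rcases le_or_gt |t - 1| δ with hnear | hfar
  · exact le_add_right (ENNReal.ofReal_le_ofReal hnear)
  refine le_add_left ?_
  rcases le_or_gt t 1 with ht | ht
  · refine (hslope (1 - δ) t (by simp [abs_of_pos hδ0]) (by nlinarith) hfar.le).trans ?_
    exact mul_le_mul_right (mul_le_mul_right le_self_add _) _
  · refine (hslope (1 + δ) t (by simp [abs_of_pos hδ0]) (by nlinarith) hfar.le).trans ?_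
    exact mul_le_mul_right (mul_le_mul_right le_add_self _) _

end IsEntropy

lemma MeasureTheory.Measure.map_withDensity_comp {Ω T : Type*} [MeasurableSpace Ω]
    [MeasurableSpace T] (π : Measure Ω) {φ : Ω → T}
    (hφ : Measurable φ) {k : T → ℝ≥0∞} (hk : Measurable k) :
    (π.withDensity (k ∘ φ)).map φ = (π.map φ).withDensity k := by
  ext s hs
  rw [Measure.map_apply hφ hs, withDensity_apply _ (hφ hs), withDensity_apply _ hs,
    setLIntegral_map hs hk hφ]
  rfl

lemma MeasureTheory.Measure.inv_smul_smul_measure_univ {T : Type*} [MeasurableSpace T]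
    (m : Measure T) [IsFiniteMeasure m] :
    (m Set.univ)⁻¹ • m Set.univ • m = m := by
  rcases eq_or_ne (m Set.univ) 0 with h | h
  · simp [Measure.measure_univ_eq_zero.1 h]
  · rw [smul_smul, ENNReal.inv_mul_cancel h (measure_ne_top _ _), one_smul]

section Density

variable {T : Type*} [MeasurableSpace T]

def rnDerivDefect (ρ μ : Measure T) : ℝ≥0∞ :=
  ∫⁻ x, ENNReal.ofReal |(ρ.rnDeriv μ x).toReal - 1| ∂μ

lemma rnDerivDefect_eq {ρ μ : Measure T} [SigmaFinite ρ] :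
    rnDerivDefect ρ μ = ∫⁻ x, 1 - ρ.rnDeriv μ x ∂μ + ∫⁻ x, ρ.rnDeriv μ x - 1 ∂μ := by
  rw [← lintegral_add_left (by fun_prop)]
  refine lintegral_congr_ae ?_
  filter_upwards [Measure.rnDeriv_lt_top ρ μ] with x hx
  exact (ENNReal.one_sub_add_sub_one hx.ne).symm

lemma rnDerivDefect_le_csiszar {Ψ : ℝ → ℝ≥0∞} {η : ℝ≥0∞} {c : ℝ≥0}
    (hΨ : ∀ t : ℝ, ENNReal.ofReal |t - 1| ≤ η + Ψ t * c)
    {ρ μ : Measure T} [IsProbabilityMeasure μ] (hρ : ρ ≪ μ) :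
    rnDerivDefect ρ μ ≤ η + csiszar Ψ ρ μ * c :=
  calc rnDerivDefect ρ μ ≤ ∫⁻ x, (η + Ψ (ρ.rnDeriv μ x).toReal * c) ∂μ :=
        lintegral_mono fun x => hΨ _
    _ = η + csiszar Ψ ρ μ * c := by
        rw [lintegral_add_left measurable_const, lintegral_const, measure_univ, mul_one,
          lintegral_mul_const' _ _ ENNReal.coe_ne_top, csiszar, if_pos hρ]

lemma csiszar_self {Ψ : ℝ → ℝ≥0∞} (hΨ : Ψ 1 = 0)
    (μ : Measure T) [SigmaFinite μ] : csiszar Ψ μ μ = 0 := by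
  rw [csiszar, if_pos Measure.AbsolutelyContinuous.rfl]
  refine (lintegral_congr_ae ?_).trans lintegral_zero
  filter_upwards [Measure.rnDeriv_self μ] with z hz
  simp [hz, hΨ]

lemma absolutelyContinuous_of_csiszar_ne_top {Ψ : ℝ → ℝ≥0∞}
    {ρ σ : Measure T} (h : csiszar Ψ ρ σ ≠ ∞) : ρ ≪ σ := by
  by_contra hρ
  exact h (if_neg hρ)

variable {ρ μ : Measure T} [ρ.HaveLebesgueDecomposition μ]

lemma withDensity_min_one_inv_rnDeriv_le (hρ : ρ ≪ μ) :
    ρ.withDensity (fun x => min 1 (ρ.rnDeriv μ x)⁻¹) ≤ μ :=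
  calc ρ.withDensity (fun x => min 1 (ρ.rnDeriv μ x)⁻¹)
      = μ.withDensity (ρ.rnDeriv μ * fun x => min 1 (ρ.rnDeriv μ x)⁻¹) := by
        rw [withDensity_mul _ (Measure.measurable_rnDeriv _ _) (by fun_prop),
          Measure.withDensity_rnDeriv_eq _ _ hρ]
    _ ≤ μ.withDensity 1 := withDensity_mono (.of_forall fun x => ENNReal.mul_min_one_inv_le_one _)
    _ = μ := withDensity_one

lemma lintegral_one_sub_min_one_inv_rnDeriv_le (hρ : ρ ≪ μ) :
    ∫⁻ x, 1 - min 1 (ρ.rnDeriv μ x)⁻¹ ∂ρ ≤ ∫⁻ x, ρ.rnDeriv μ x - 1 ∂μ := by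
  calc ∫⁻ x, 1 - min 1 (ρ.rnDeriv μ x)⁻¹ ∂ρ
      = ∫⁻ x, 1 - min 1 (ρ.rnDeriv μ x)⁻¹ ∂(μ.withDensity (ρ.rnDeriv μ)) := by
        rw [Measure.withDensity_rnDeriv_eq _ _ hρ]
    _ ≤ ∫⁻ x, ρ.rnDeriv μ x - 1 ∂μ := by
        rw [lintegral_withDensity_eq_lintegral_mul _ (Measure.measurable_rnDeriv _ _)
          (by fun_prop)]
        exact lintegral_mono fun x => ENNReal.mul_one_sub_min_one_inv_le _

end Density

section Coupling

variable {A B : Type*} [MeasurableSpace A] [MeasurableSpace B]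
  (π : Measure (A × B)) (μ : Measure A) (ν : Measure B)

lemma exists_coupling_lintegral_le_add [IsProbabilityMeasure μ] [IsProbabilityMeasure ν]
    (C : A × B → ℝ≥0∞) {X : Set A} {Y : Set B} {K : ℝ≥0∞} (hK : ∀ x ∈ X, ∀ y ∈ Y, C (x, y) ≤ K)
    (hμX : μ Xᶜ = 0) (hνY : ν Yᶜ = 0) (ρ : Measure (A × B))
    (h₁ : ρ.map Prod.fst ≤ μ) (h₂ : ρ.map Prod.snd ≤ ν) :
    ∃ π' : Measure (A × B), π'.map Prod.fst = μ ∧ π'.map Prod.snd = ν ∧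
      ∫⁻ z, C z ∂π' ≤ ∫⁻ z, C z ∂ρ + K * (1 - ρ Set.univ) := by
  have : IsFiniteMeasure (ρ.map Prod.fst) := isFiniteMeasure_of_le μ h₁
  have : IsFiniteMeasure (ρ.map Prod.snd) := isFiniteMeasure_of_le ν h₂
  set r₁ := μ - ρ.map Prod.fst
  set r₂ := ν - ρ.map Prod.snd
  have : IsFiniteMeasure r₁ := isFiniteMeasure_of_le μ Measure.sub_le
  have : IsFiniteMeasure r₂ := isFiniteMeasure_of_le ν Measure.sub_le
  set s := 1 - ρ Set.univ
  have hr₁ : r₁ Set.univ = s := by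
    rw [Measure.sub_apply .univ h₁, measure_univ, Measure.map_apply measurable_fst .univ,
      Set.preimage_univ]
  have hr₂ : r₂ Set.univ = s := by
    rw [Measure.sub_apply .univ h₂, measure_univ, Measure.map_apply measurable_snd .univ,
      Set.preimage_univ]
  have hCK : ∀ᵐ z ∂r₁.prod r₂, C z ≤ K := by
    filter_upwards [Measure.quasiMeasurePreserving_fst.ae
        (ae_mono Measure.sub_le (mem_ae_iff.2 hμX : ∀ᵐ x ∂μ, x ∈ X)),
      Measure.quasiMeasurePreserving_snd.ae
        (ae_mono Measure.sub_le (mem_ae_iff.2 hνY : ∀ᵐ y ∂ν, y ∈ Y))] with z hx hy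
    exact hK _ hx _ hy
  refine ⟨ρ + s⁻¹ • r₁.prod r₂, ?_, ?_, ?_⟩
  · rw [Measure.map_add _ _ measurable_fst, Measure.map_smul, Measure.map_fst_prod, hr₂, ← hr₁,
      Measure.inv_smul_smul_measure_univ, add_comm, Measure.sub_add_cancel_of_le h₁]
  · rw [Measure.map_add _ _ measurable_snd, Measure.map_smul, Measure.map_snd_prod, hr₁, ← hr₂,
      Measure.inv_smul_smul_measure_univ, add_comm, Measure.sub_add_cancel_of_le h₂]
  have hprod : ∫⁻ z, C z ∂r₁.prod r₂ ≤ s * (K * s) :=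
    calc ∫⁻ z, C z ∂r₁.prod r₂ ≤ ∫⁻ _, K ∂r₁.prod r₂ := lintegral_mono_ae hCK
      _ = s * (K * s) := by
          rw [lintegral_const, ← Set.univ_prod_univ, Measure.prod_prod, hr₁, hr₂]; ring
  calc ∫⁻ z, C z ∂(ρ + s⁻¹ • r₁.prod r₂) = ∫⁻ z, C z ∂ρ + s⁻¹ * ∫⁻ z, C z ∂r₁.prod r₂ := by
        rw [lintegral_add_measure, lintegral_smul_measure, smul_eq_mul]
    _ ≤ ∫⁻ z, C z ∂ρ + K * s := by
        refine add_le_add_right ((mul_le_mul_right hprod _).trans ?_) _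
        rcases eq_or_ne s 0 with hs | hs
        · simp [hs]
        · rw [ENNReal.inv_mul_cancel_left hs (ne_top_of_le_ne_top ENNReal.one_ne_top tsub_le_self)]

def marginalTruncation : Measure (A × B) :=
  π.withDensity fun z =>
    min 1 ((π.map Prod.fst).rnDeriv μ z.1)⁻¹ * min 1 ((π.map Prod.snd).rnDeriv ν z.2)⁻¹

lemma marginalTruncation_le : marginalTruncation π μ ν ≤ π :=
  (withDensity_mono (.of_forall fun _ => mul_le_one' (min_le_left _ _) (min_le_left _ _))).trans
    withDensity_one.le

variable [IsFiniteMeasure π]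

lemma map_fst_marginalTruncation_le [SigmaFinite μ] (h : π.map Prod.fst ≪ μ) :
    (marginalTruncation π μ ν).map Prod.fst ≤ μ :=
  calc (marginalTruncation π μ ν).map Prod.fst
      ≤ (π.withDensity ((fun x => min 1 ((π.map Prod.fst).rnDeriv μ x)⁻¹) ∘ Prod.fst)).map
          Prod.fst :=
        Measure.map_mono (withDensity_mono (.of_forall fun _ =>
          mul_le_of_le_one_right' (min_le_left _ _))) measurable_fst
    _ = (π.map Prod.fst).withDensity fun x => min 1 ((π.map Prod.fst).rnDeriv μ x)⁻¹ :=
        Measure.map_withDensity_comp π measurable_fst (by fun_prop)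
    _ ≤ μ := withDensity_min_one_inv_rnDeriv_le h

lemma map_snd_marginalTruncation_le [SigmaFinite ν] (h : π.map Prod.snd ≪ ν) :
    (marginalTruncation π μ ν).map Prod.snd ≤ ν :=
  calc (marginalTruncation π μ ν).map Prod.snd
      ≤ (π.withDensity ((fun y => min 1 ((π.map Prod.snd).rnDeriv ν y)⁻¹) ∘ Prod.snd)).map
          Prod.snd :=
        Measure.map_mono (withDensity_mono (.of_forall fun _ =>
          mul_le_of_le_one_left' (min_le_left _ _))) measurable_snd
    _ = (π.map Prod.snd).withDensity fun y => min 1 ((π.map Prod.snd).rnDeriv ν y)⁻¹ :=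
        Measure.map_withDensity_comp π measurable_snd (by fun_prop)
    _ ≤ ν := withDensity_min_one_inv_rnDeriv_le h

lemma measure_univ_le_marginalTruncation_add_lintegral [SigmaFinite μ] [SigmaFinite ν]
    (h₁ : π.map Prod.fst ≪ μ) (h₂ : π.map Prod.snd ≪ ν) :
    π Set.univ ≤ marginalTruncation π μ ν Set.univ
      + (∫⁻ x, (π.map Prod.fst).rnDeriv μ x - 1 ∂μ
        + ∫⁻ y, (π.map Prod.snd).rnDeriv ν y - 1 ∂ν) := by
  set f := (π.map Prod.fst).rnDeriv μ
  set g := (π.map Prod.snd).rnDeriv ν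
  calc π Set.univ = ∫⁻ _, 1 ∂π := lintegral_one.symm
    _ ≤ ∫⁻ z, min 1 (f z.1)⁻¹ * min 1 (g z.2)⁻¹
          + ((1 - min 1 (f z.1)⁻¹) + (1 - min 1 (g z.2)⁻¹)) ∂π :=
        lintegral_mono fun _ =>
          ENNReal.one_le_mul_add_one_sub_add_one_sub (min_le_left _ _) (min_le_left _ _)
    _ = marginalTruncation π μ ν Set.univ
          + (∫⁻ x, 1 - min 1 (f x)⁻¹ ∂(π.map Prod.fst)
            + ∫⁻ y, 1 - min 1 (g y)⁻¹ ∂(π.map Prod.snd)) := by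
        rw [lintegral_add_left (by fun_prop), lintegral_add_left (by fun_prop),
          lintegral_map (by fun_prop) measurable_fst, lintegral_map (by fun_prop) measurable_snd,
          marginalTruncation, withDensity_apply _ .univ, Measure.restrict_univ]
    _ ≤ _ := add_le_add_right (add_le_add (lintegral_one_sub_min_one_inv_rnDeriv_le h₁)
        (lintegral_one_sub_min_one_inv_rnDeriv_le h₂)) _

lemma measure_univ_le_marginalTruncation_add [SigmaFinite μ] [SigmaFinite ν]
    (h₁ : π.map Prod.fst ≪ μ) (h₂ : π.map Prod.snd ≪ ν) :
    μ Set.univ ≤ marginalTruncation π μ ν Set.univ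
      + (rnDerivDefect (π.map Prod.fst) μ + rnDerivDefect (π.map Prod.snd) ν) := by
  set f := (π.map Prod.fst).rnDeriv μ
  set g := (π.map Prod.snd).rnDeriv ν
  have hπ : π Set.univ = ∫⁻ x, f x ∂μ := by
    rw [Measure.lintegral_rnDeriv h₁, Measure.map_apply measurable_fst .univ, Set.preimage_univ]
  calc μ Set.univ = ∫⁻ _, 1 ∂μ := lintegral_one.symm
    _ ≤ ∫⁻ x, f x + (1 - f x) ∂μ := lintegral_mono fun _ => le_add_tsub
    _ = π Set.univ + ∫⁻ x, 1 - f x ∂μ := by rw [lintegral_add_left (by fun_prop), hπ]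
    _ ≤ marginalTruncation π μ ν Set.univ + (∫⁻ x, f x - 1 ∂μ + ∫⁻ y, g y - 1 ∂ν)
          + ∫⁻ x, 1 - f x ∂μ :=
        add_le_add_left (measure_univ_le_marginalTruncation_add_lintegral π μ ν h₁ h₂) _
    _ = marginalTruncation π μ ν Set.univ
          + ((∫⁻ x, 1 - f x ∂μ + ∫⁻ x, f x - 1 ∂μ) + ∫⁻ y, g y - 1 ∂ν) := by ring
    _ ≤ _ := by
        rw [rnDerivDefect_eq, rnDerivDefect_eq]
        exact add_le_add_right (add_le_add_right le_add_self _) _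

lemma exists_coupling_lintegral_le [IsProbabilityMeasure μ] [IsProbabilityMeasure ν]
    (C : A × B → ℝ≥0∞) {X : Set A} {Y : Set B} {K : ℝ≥0∞} (hK : ∀ x ∈ X, ∀ y ∈ Y, C (x, y) ≤ K)
    (hμX : μ Xᶜ = 0) (hνY : ν Yᶜ = 0) (h₁ : π.map Prod.fst ≪ μ) (h₂ : π.map Prod.snd ≪ ν) :
    ∃ π' : Measure (A × B), π'.map Prod.fst = μ ∧ π'.map Prod.snd = ν ∧
      ∫⁻ z, C z ∂π' ≤ ∫⁻ z, C z ∂π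
        + K * (rnDerivDefect (π.map Prod.fst) μ + rnDerivDefect (π.map Prod.snd) ν) := by
  obtain ⟨π', hπ'₁, hπ'₂, hC⟩ := exists_coupling_lintegral_le_add μ ν C hK hμX hνY
    (marginalTruncation π μ ν) (map_fst_marginalTruncation_le π μ ν h₁)
    (map_snd_marginalTruncation_le π μ ν h₂)
  have hmass := measure_univ_le_marginalTruncation_add π μ ν h₁ h₂
  rw [measure_univ, ← tsub_le_iff_left] at hmass
  exact ⟨π', hπ'₁, hπ'₂, hC.trans (add_le_add (lintegral_mono' (marginalTruncation_le π μ ν) le_rfl)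
    (mul_le_mul_right hmass K))⟩

end Coupling

lemma exists_cost_le {d : ℕ} (τ : ℝ) {X Y : Set (EuclideanSpace ℝ (Fin d))} (hX : IsCompact X)
    (hY : IsCompact Y) : ∃ K : ℝ≥0, ∀ x ∈ X, ∀ y ∈ Y, ENNReal.ofReal (cost τ x y) ≤ K := by
  obtain ⟨K, hK⟩ := (hX.prod hY).exists_bound_of_continuousOn
    (f := fun z => cost τ z.1 z.2) (by unfold cost; fun_prop)
  refine ⟨K.toNNReal, fun x hx y hy => ENNReal.ofReal_le_ofReal ?_⟩
  exact (le_abs_self _).trans (hK (x, y) ⟨hx, hy⟩)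

section UOT

variable {d : ℕ} {τ : ℝ} {Ψ₁ Ψ₂ : ℝ → ℝ≥0∞} {X Y : Set (EuclideanSpace ℝ (Fin d))}
  {μ ν : Measure (EuclideanSpace ℝ (Fin d))}

lemma UOTcost_monotone : Monotone fun α => UOTcost τ α Ψ₁ Ψ₂ X Y μ ν := by
  intro α β hαβ
  refine iInf_mono fun π => iInf_mono fun _ => iInf_mono fun _ => ?_
  unfold uotObj
  gcongr

lemma UOTcost_le_OTcost [IsProbabilityMeasure μ] [IsProbabilityMeasure ν]
    (hμX : μ Xᶜ = 0) (hνY : ν Yᶜ = 0) (hΨ₁ : Ψ₁ 1 = 0) (hΨ₂ : Ψ₂ 1 = 0) (α : ℝ) :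
    UOTcost τ α Ψ₁ Ψ₂ X Y μ ν ≤ OTcost τ μ ν := by
  refine le_iInf₂ fun π ⟨hπ₁, hπ₂⟩ => ?_
  have : IsFiniteMeasure (π.map Prod.fst) := hπ₁ ▸ inferInstance
  have : IsFiniteMeasure π := Measure.isFiniteMeasure_of_map measurable_fst.aemeasurable
  have hsupp : π (X ×ˢ Y)ᶜ = 0 := by
    rw [← mem_ae_iff]
    filter_upwards [ae_of_ae_map measurable_fst.aemeasurable (hπ₁ ▸ mem_ae_iff.2 hμX),
      ae_of_ae_map measurable_snd.aemeasurable (hπ₂ ▸ mem_ae_iff.2 hνY)] with z hx hy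
    exact ⟨hx, hy⟩
  calc UOTcost τ α Ψ₁ Ψ₂ X Y μ ν ≤ uotObj τ α Ψ₁ Ψ₂ μ ν π := iInf_le_of_le π (iInf₂_le ‹_› hsupp)
    _ = ∫⁻ z, ENNReal.ofReal (cost τ z.1 z.2) ∂π := by
        simp [uotObj, hπ₁, hπ₂, csiszar_self hΨ₁, csiszar_self hΨ₂]

variable [IsProbabilityMeasure μ] [IsProbabilityMeasure ν] {K : ℝ≥0}
  (hK : ∀ x ∈ X, ∀ y ∈ Y, ENNReal.ofReal (cost τ x y) ≤ K) (hμX : μ Xᶜ = 0) (hνY : ν Yᶜ = 0)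
  {η : ℝ≥0∞} {c₁ c₂ : ℝ≥0} (hΨ₁ : ∀ t : ℝ, ENNReal.ofReal |t - 1| ≤ η + Ψ₁ t * c₁)
  (hΨ₂ : ∀ t : ℝ, ENNReal.ofReal |t - 1| ≤ η + Ψ₂ t * c₂)
include hK hμX hνY hΨ₁ hΨ₂

lemma OTcost_le_uotObj_mul_add {α : ℝ} (hα : 0 < α)
    (π : Measure (EuclideanSpace ℝ (Fin d) × EuclideanSpace ℝ (Fin d))) [IsFiniteMeasure π] :
    OTcost τ μ ν ≤ uotObj τ α Ψ₁ Ψ₂ μ ν π * (1 + K * (c₁ + c₂) / ENNReal.ofReal α)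
      + K * (2 * η) := by
  set obj := uotObj τ α Ψ₁ Ψ₂ μ ν π
  rcases eq_or_ne obj ∞ with hobj | hobj
  · simp [hobj]
  set I := ∫⁻ z, ENNReal.ofReal (cost τ z.1 z.2) ∂π
  set D₁ := csiszar Ψ₁ (π.map Prod.fst) μ
  set D₂ := csiszar Ψ₂ (π.map Prod.snd) ν
  have hα' : ENNReal.ofReal α ≠ 0 := (ENNReal.ofReal_pos.2 hα).ne'
  have hobj_eq : obj = I + ENNReal.ofReal α * D₁ + ENNReal.ofReal α * D₂ := rfl
  have h₁ : π.map Prod.fst ≪ μ := absolutelyContinuous_of_csiszar_ne_top (Ψ := Ψ₁)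
    fun h => hobj (by simp [hobj_eq, D₁, h, hα'])
  have h₂ : π.map Prod.snd ≪ ν := absolutelyContinuous_of_csiszar_ne_top (Ψ := Ψ₂)
    fun h => hobj (by simp [hobj_eq, D₂, h, hα'])
  have hI : I ≤ obj := by rw [hobj_eq, add_assoc]; exact le_self_add
  have hD : D₁ + D₂ ≤ obj / ENNReal.ofReal α := by
    rw [ENNReal.le_div_iff_mul_le (.inl hα') (.inl ENNReal.ofReal_ne_top), hobj_eq, add_assoc]
    exact (le_of_eq (by ring)).trans le_add_self
  obtain ⟨π', hπ'₁, hπ'₂, hcost⟩ := exists_coupling_lintegral_le π μ ν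
    (fun z => ENNReal.ofReal (cost τ z.1 z.2)) hK hμX hνY h₁ h₂
  calc OTcost τ μ ν ≤ ∫⁻ z, ENNReal.ofReal (cost τ z.1 z.2) ∂π' := iInf₂_le π' ⟨hπ'₁, hπ'₂⟩
    _ ≤ I + K * ((η + D₁ * c₁) + (η + D₂ * c₂)) :=
        hcost.trans (by gcongr <;> exact rnDerivDefect_le_csiszar ‹_› ‹_›)
    _ = I + (K * D₁ * c₁ + K * D₂ * c₂) + K * (2 * η) := by ring
    _ ≤ I + (K * D₁ * c₁ + K * D₂ * c₂ + (K * D₁ * c₂ + K * D₂ * c₁)) + K * (2 * η) :=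
        add_le_add_left (add_le_add_right le_self_add _) _
    _ = I + (D₁ + D₂) * (K * (c₁ + c₂)) + K * (2 * η) := by ring
    _ ≤ obj + obj / ENNReal.ofReal α * (K * (c₁ + c₂)) + K * (2 * η) := by gcongr
    _ = obj * (1 + K * (c₁ + c₂) / ENNReal.ofReal α) + K * (2 * η) := by
        simp only [div_eq_mul_inv]; ring

lemma OTcost_le_UOTcost_mul_add {α : ℝ} (hα : 0 < α) :
    OTcost τ μ ν ≤ UOTcost τ α Ψ₁ Ψ₂ X Y μ ν * (1 + K * (c₁ + c₂) / ENNReal.ofReal α)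
      + K * (2 * η) := by
  have h0 : 1 + K * (c₁ + c₂) / ENNReal.ofReal α ≠ 0 := by positivity
  have htop : 1 + K * (c₁ + c₂) / ENNReal.ofReal α ≠ ∞ := ENNReal.add_ne_top.2
    ⟨ENNReal.one_ne_top, ENNReal.div_ne_top (by norm_cast; exact ENNReal.coe_ne_top)
      (ENNReal.ofReal_pos.2 hα).ne'⟩
  -- dividing by the factor lets the bound for each `π` pass to the infimum
  rw [← tsub_le_iff_right, ← ENNReal.div_le_iff h0 htop]
  refine le_iInf fun π => le_iInf₂ fun _ _ => ?_
  rw [ENNReal.div_le_iff h0 htop, tsub_le_iff_right]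
  exact OTcost_le_uotObj_mul_add hK hμX hνY hΨ₁ hΨ₂ hα π

lemma OTcost_le_iSup_UOTcost_add :
    OTcost τ μ ν ≤ (⨆ α, UOTcost τ α Ψ₁ Ψ₂ X Y μ ν) + K * (2 * η) := by
  have hfactor : Tendsto (fun α => 1 + K * (c₁ + c₂) / ENNReal.ofReal α) atTop (𝓝 1) := by
    simpa using tendsto_const_nhds.add (ENNReal.Tendsto.const_div ENNReal.tendsto_ofReal_atTop
      (.inr (by norm_cast; exact ENNReal.coe_ne_top)))
  have hlim : Tendsto (fun α => UOTcost τ α Ψ₁ Ψ₂ X Y μ ν * (1 + K * (c₁ + c₂) / ENNReal.ofReal α)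
      + K * (2 * η)) atTop (𝓝 ((⨆ α, UOTcost τ α Ψ₁ Ψ₂ X Y μ ν) + K * (2 * η))) := by
    simpa using (ENNReal.Tendsto.mul (tendsto_atTop_iSup UOTcost_monotone)
      (.inr ENNReal.one_ne_top) hfactor (.inl one_ne_zero)).add_const (K * (2 * η))
  exact ge_of_tendsto hlim ((eventually_gt_atTop 0).mono fun α hα =>
    OTcost_le_UOTcost_mul_add hK hμX hνY hΨ₁ hΨ₂ hα)

end UOT

theorem uotcost_tendsto_otcost_general
    {d : ℕ} (τ : ℝ)
    (X Y : Set (EuclideanSpace ℝ (Fin d))) (hX : IsCompact X) (hY : IsCompact Y)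
    (μ ν : Measure (EuclideanSpace ℝ (Fin d)))
    [IsProbabilityMeasure μ] [IsProbabilityMeasure ν]
    (hμX : μ Xᶜ = 0) (hνY : ν Yᶜ = 0)
    (Ψ₁ Ψ₂ : ℝ → ℝ≥0∞) (hΨ₁ : IsEntropy Ψ₁) (hΨ₂ : IsEntropy Ψ₂)
    (hΨ₁sc : StrictlyConvexOnPos Ψ₁) (hΨ₂sc : StrictlyConvexOnPos Ψ₂)
    (hΨ₁fin : ∀ x : ℝ, 0 < x → Ψ₁ x ≠ ∞) (hΨ₂fin : ∀ x : ℝ, 0 < x → Ψ₂ x ≠ ∞) :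
    Tendsto (fun α : ℝ => UOTcost τ α Ψ₁ Ψ₂ X Y μ ν) atTop (𝓝 (OTcost τ μ ν)) := by
  obtain ⟨K, hK⟩ := exists_cost_le τ hX hY
  have hδ : ∀ δ ∈ Set.Ioo (0 : ℝ) 1, OTcost τ μ ν
      ≤ (⨆ α, UOTcost τ α Ψ₁ Ψ₂ X Y μ ν) + K * (2 * ENNReal.ofReal δ) := by
    rintro δ ⟨hδ0, hδ1⟩
    obtain ⟨c₁, hc₁⟩ := hΨ₁.exists_abs_sub_one_le hΨ₁sc hΨ₁fin hδ0 hδ1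
    obtain ⟨c₂, hc₂⟩ := hΨ₂.exists_abs_sub_one_le hΨ₂sc hΨ₂fin hδ0 hδ1
    exact OTcost_le_iSup_UOTcost_add hK hμX hνY hc₁ hc₂
  have hslack : Tendsto (fun δ => (⨆ α, UOTcost τ α Ψ₁ Ψ₂ X Y μ ν) + K * (2 * ENNReal.ofReal δ))
      (𝓝[>] 0) (𝓝 (⨆ α, UOTcost τ α Ψ₁ Ψ₂ X Y μ ν)) := by
    have hcont : Continuous fun δ => (⨆ α, UOTcost τ α Ψ₁ Ψ₂ X Y μ ν)
        + K * (2 * ENNReal.ofReal δ) :=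
      continuous_const.add ((ENNReal.continuous_const_mul ENNReal.coe_ne_top).comp
        ((ENNReal.continuous_const_mul ENNReal.ofNat_ne_top).comp ENNReal.continuous_ofReal))
    simpa using (hcont.tendsto 0).mono_left nhdsWithin_le_nhds
  have hsup : ⨆ α, UOTcost τ α Ψ₁ Ψ₂ X Y μ ν = OTcost τ μ ν :=
    le_antisymm (iSup_le (UOTcost_le_OTcost hμX hνY hΨ₁.one_eq_zero hΨ₂.one_eq_zero))
      (ge_of_tendsto hslack (Filter.mem_of_superset (Ioo_mem_nhdsGT one_pos) hδ))
  exact hsup ▸ tendsto_atTop_iSup UOTcost_monotone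

/-- If `Ψ₁, Ψ₂` are strictly convex and finite on `(0,∞)`, then
`C_ub^α(μ,ν) → C(μ,ν)` as `α → ∞`. -/
theorem uotcost_tendsto_otcost
    {d : ℕ} (τ : ℝ) (hτ : 0 < τ)
    (X Y : Set (EuclideanSpace ℝ (Fin d))) (hX : IsCompact X) (hY : IsCompact Y)
    (μ ν : Measure (EuclideanSpace ℝ (Fin d)))
    [IsProbabilityMeasure μ] [IsProbabilityMeasure ν]
    (hμX : μ Xᶜ = 0) (hνY : ν Yᶜ = 0)
    (Ψ₁ Ψ₂ : ℝ → ℝ≥0∞) (hΨ₁ : IsEntropy Ψ₁) (hΨ₂ : IsEntropy Ψ₂)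
    (hΨ₁sc : StrictlyConvexOnPos Ψ₁) (hΨ₂sc : StrictlyConvexOnPos Ψ₂)
    (hΨ₁fin : ∀ x : ℝ, 0 < x → Ψ₁ x ≠ ∞) (hΨ₂fin : ∀ x : ℝ, 0 < x → Ψ₂ x ≠ ∞) :
    Tendsto (fun α : ℝ => UOTcost τ α Ψ₁ Ψ₂ X Y μ ν) atTop (𝓝 (OTcost τ μ ν)) :=
  uotcost_tendsto_otcost_general τ X Y hX hY μ ν hμX hνY Ψ₁ Ψ₂ hΨ₁ hΨ₂ hΨ₁sc hΨ₂sc hΨ₁fin hΨ₂fin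
end
end
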